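/- Let X be a real m×p matrix with m ≥ p such that XᵀX is invertible, and let d_min > 0 be the smallest eigenvalue of (1/m)XᵀX. Let σ² > 0, ε > 0, and let β⁰, β¹ ∈ ℝ^p satisfy ‖β¹ − β⁰‖₂ ≥ ε√p. Let β̂(y) = (XᵀX)⁻¹Xᵀy. Then for y ∼ N(Xβ¹, σ²I_m), P(‖β̂(y) − β⁰‖₂ ≤ ε√p/2) ≤ exp{−(ε²·d_min/(16σ²) − log 2/(2m))·m·p}. -/

import Mathlib

/-!
Write `ξ = y - Xβ¹` and let `P = X(XᵀX)⁻¹Xᵀ` be the hat matrix, so that `X(β̂(y) - β¹) = Pξ`.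
On the event, the triangle inequality gives `‖β̂(y) - β¹‖² ≥ ε²p/4`, and the eigenvalue bound
`‖Xv‖² ≥ m d_min ‖v‖²` turns this into `ξᵀPξ ≥ t := m d_min ε² p / 4`. A Chernoff bound with the
exponent `ξᵀPξ / (4σ²)` then dominates the density on the event by
`e^{-t/(4σ²)} (2πσ²)^{-m/2} exp(-ξᵀ(I - P/2)ξ / (2σ²))`, whose integral is
`e^{-t/(4σ²)} det(I - P/2)^{-1/2} = e^{-t/(4σ²)} 2^{p/2}` because `P` is a projection of rank `p`.
-/

open MeasureTheory Matrix

/-- The Lebesgue density of the Gaussian measure `N(μ, σ²I_m)` on `ℝ^m`. -/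
noncomputable def gaussDensity (m : ℕ) (μ : Fin m → ℝ) (σ2 : ℝ) (y : Fin m → ℝ) : ℝ :=
  (2 * Real.pi * σ2) ^ (-(m : ℝ) / 2) * Real.exp (-(∑ i, (y i - μ i) ^ 2) / (2 * σ2))

/-- The Gaussian probability measure `N(μ, σ²I_m)` on `ℝ^m`, given by its density
with respect to Lebesgue measure. -/
noncomputable def gaussMeasure (m : ℕ) (μ : Fin m → ℝ) (σ2 : ℝ) : Measure (Fin m → ℝ) :=
  volume.withDensity fun y => ENNReal.ofReal (gaussDensity m μ σ2 y)

/-- The ordinary least squares estimator `β̂(y) = (XᵀX)⁻¹Xᵀy`. -/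
noncomputable def ols (m p : ℕ) (X : Matrix (Fin m) (Fin p) ℝ) (y : Fin m → ℝ) :
    Fin p → ℝ :=
  ((Xᵀ * X)⁻¹).mulVec (Xᵀ.mulVec y)

namespace Matrix

variable {n : Type*} [Fintype n] [DecidableEq n]

lemma dotProduct_mulVec_self_of_mem_unitaryGroup {U : Matrix n n ℝ} (hU : U ∈ unitaryGroup n ℝ)
    (v : n → ℝ) : (U *ᵥ v) ⬝ᵥ (U *ᵥ v) = v ⬝ᵥ v := by
  rw [dotProduct_mulVec, vecMul_mulVec, ← mulVec_transpose,
    show Uᵀ = star U from (conjTranspose_eq_transpose_of_trivial U).symm,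
    mem_unitaryGroup_iff'.mp hU, transpose_one, one_mulVec, dotProduct_comm]

lemma IsHermitian.dotProduct_mulVec_eq_sum_eigenvalues {A : Matrix n n ℝ} (hA : A.IsHermitian)
    (v : n → ℝ) :
    v ⬝ᵥ A *ᵥ v =
      ∑ i, hA.eigenvalues i * (star (hA.eigenvectorUnitary : Matrix n n ℝ) *ᵥ v) i ^ 2 := by
  conv_lhs => rw [hA.spectral_theorem, Unitary.conjStarAlgAut_apply]
  rw [← mulVec_mulVec, ← mulVec_mulVec, dotProduct_mulVec, ← mulVec_transpose,
    ← conjTranspose_eq_transpose_of_trivial, ← star_eq_conjTranspose]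
  simp [dotProduct, mulVec_diagonal, sq, mul_left_comm]

lemma IsHermitian.mul_dotProduct_self_le {A : Matrix n n ℝ} (hA : A.IsHermitian) {c : ℝ}
    (hc : ∀ i, c ≤ hA.eigenvalues i) (v : n → ℝ) : c * (v ⬝ᵥ v) ≤ v ⬝ᵥ A *ᵥ v := by
  set w := star (hA.eigenvectorUnitary : Matrix n n ℝ) *ᵥ v
  have hw : w ⬝ᵥ w = v ⬝ᵥ v :=
    dotProduct_mulVec_self_of_mem_unitaryGroup (Unitary.star_mem hA.eigenvectorUnitary.2) v
  rw [hA.dotProduct_mulVec_eq_sum_eigenvalues, ← hw, dotProduct, Finset.mul_sum]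
  exact Finset.sum_le_sum fun i _ => by
    rw [← sq]; exact mul_le_mul_of_nonneg_right (hc i) (sq_nonneg _)

lemma measurePreserving_toLin'_of_mem_unitaryGroup {U : Matrix n n ℝ} (hU : U ∈ unitaryGroup n ℝ) :
    MeasurePreserving (toLin' U) := by
  have hdet : |U.det| = 1 := CStarRing.norm_of_mem_unitary (E := ℝ) (det_of_mem_unitary hU)
  refine ⟨(toLin' U).continuous_of_finiteDimensional.measurable, ?_⟩
  rw [Real.map_matrix_volume_pi_eq_smul_volume_pi (by rintro h; simp [h] at hdet), abs_inv, hdet]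
  simp

lemma lintegral_exp_neg_dotProduct_mulVec {M : Matrix n n ℝ} (hM : M.PosDef) :
    ∫⁻ ξ : n → ℝ, ENNReal.ofReal (Real.exp (-(ξ ⬝ᵥ M *ᵥ ξ))) =
      ENNReal.ofReal (Real.sqrt (Real.pi ^ Fintype.card n / M.det)) := by
  set U : Matrix n n ℝ := (hM.1.eigenvectorUnitary : Matrix n n ℝ)
  set d := hM.1.eigenvalues
  have hU : U ∈ unitaryGroup n ℝ := hM.1.eigenvectorUnitary.2
  have hrot (η : n → ℝ) : (U *ᵥ η) ⬝ᵥ M *ᵥ (U *ᵥ η) = ∑ i, d i * η i ^ 2 := by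
    rw [hM.1.dotProduct_mulVec_eq_sum_eigenvalues, mulVec_mulVec, mem_unitaryGroup_iff'.mp hU,
      one_mulVec]
  have hsplit (η : n → ℝ) :
      Real.exp (-∑ i, d i * η i ^ 2) = ∏ i, Real.exp (-d i * η i ^ 2) := by
    rw [← Real.exp_sum, ← Finset.sum_neg_distrib]
    simp only [neg_mul]
  have hint : Integrable fun η : n → ℝ => ∏ i, Real.exp (-d i * η i ^ 2) :=
    Integrable.fintype_prod (f := fun i x => Real.exp (-d i * x ^ 2))
      fun i => integrable_exp_neg_mul_sq (hM.eigenvalues_pos i)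
  rw [← (measurePreserving_toLin'_of_mem_unitaryGroup hU).lintegral_comp (by fun_prop)]
  simp_rw [toLin'_apply, hrot, hsplit]
  rw [← ofReal_integral_eq_lintegral_ofReal hint (.of_forall fun η => by positivity),
    integral_fintype_prod_volume_eq_prod (f := fun i x => Real.exp (-d i * x ^ 2))]
  simp_rw [integral_gaussian]
  rw [← Real.sqrt_prod _ fun i _ => (div_pos Real.pi_pos (hM.eigenvalues_pos i)).le,
    Finset.prod_div_distrib, Finset.prod_const, Finset.card_univ,
    hM.1.det_eq_prod_eigenvalues]
  rfl

lemma dotProduct_transpose_mul_mulVec {m p : Type*} [Fintype m] [Fintype p] (X : Matrix m p ℝ)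
    (v : p → ℝ) : v ⬝ᵥ (Xᵀ * X) *ᵥ v = (X *ᵥ v) ⬝ᵥ (X *ᵥ v) := by
  rw [← mulVec_mulVec, dotProduct_mulVec, vecMul_transpose, dotProduct_comm]

section hatMatrix

variable {m p : Type*} [Fintype m] [Fintype p] [DecidableEq p]

noncomputable def hatMatrix (X : Matrix m p ℝ) : Matrix m m ℝ := X * (Xᵀ * X)⁻¹ * Xᵀ

variable {X : Matrix m p ℝ}

lemma hatMatrix_transpose : (hatMatrix X)ᵀ = hatMatrix X := by
  rw [hatMatrix, transpose_mul, transpose_mul, transpose_transpose, transpose_nonsing_inv,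
    transpose_mul, transpose_transpose, Matrix.mul_assoc]

lemma hatMatrix_mul (hX : IsUnit (Xᵀ * X).det) : hatMatrix X * X = X := by
  rw [hatMatrix, Matrix.mul_assoc, Matrix.mul_assoc, nonsing_inv_mul _ hX, Matrix.mul_one]

lemma hatMatrix_mul_self (hX : IsUnit (Xᵀ * X).det) : hatMatrix X * hatMatrix X = hatMatrix X := by
  conv_lhs => arg 2; rw [hatMatrix]
  simp only [← Matrix.mul_assoc, hatMatrix_mul hX]
  rfl

lemma dotProduct_hatMatrix_mulVec (hX : IsUnit (Xᵀ * X).det) (v : m → ℝ) :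
    v ⬝ᵥ hatMatrix X *ᵥ v = (hatMatrix X *ᵥ v) ⬝ᵥ (hatMatrix X *ᵥ v) := by
  rw [← dotProduct_transpose_mul_mulVec, hatMatrix_transpose, hatMatrix_mul_self hX]

lemma dotProduct_hatMatrix_mulVec_le (hX : IsUnit (Xᵀ * X).det) (v : m → ℝ) :
    v ⬝ᵥ hatMatrix X *ᵥ v ≤ v ⬝ᵥ v := by
  have h := dotProduct_self_star_nonneg (v - hatMatrix X *ᵥ v)
  simp only [star_trivial, sub_dotProduct, dotProduct_sub, ← dotProduct_hatMatrix_mulVec hX,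
    dotProduct_comm (hatMatrix X *ᵥ v) v] at h
  linarith

variable [DecidableEq m]

lemma det_one_sub_smul_hatMatrix (hX : IsUnit (Xᵀ * X).det) (c : ℝ) :
    (1 - c • hatMatrix X).det = (1 - c) ^ Fintype.card p := by
  have h : 1 - c • hatMatrix X = 1 + X * (-c • ((Xᵀ * X)⁻¹ * Xᵀ)) := by
    rw [hatMatrix, Matrix.mul_smul, neg_smul, ← sub_eq_add_neg, Matrix.mul_assoc]
  rw [h, det_one_add_mul_comm, Matrix.smul_mul, Matrix.mul_assoc, nonsing_inv_mul _ hX,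
    show (1 : Matrix p p ℝ) + -c • 1 = (1 - c) • 1 by module, det_smul, det_one, mul_one]

lemma posDef_one_sub_smul_hatMatrix (hX : IsUnit (Xᵀ * X).det) {c : ℝ} (hc : c < 1) :
    (1 - c • hatMatrix X).PosDef := by
  refine PosDef.of_dotProduct_mulVec_pos ?_ fun v hv => ?_
  · rw [IsHermitian, conjTranspose_eq_transpose_of_trivial, transpose_sub, transpose_one,
      transpose_smul, hatMatrix_transpose]
  · have hpos : 0 < v ⬝ᵥ v := by simpa using dotProduct_star_self_pos_iff.mpr hv
    have h0 : 0 ≤ v ⬝ᵥ hatMatrix X *ᵥ v := by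
      rw [dotProduct_hatMatrix_mulVec hX]; exact dotProduct_self_star_nonneg _
    have h1 := dotProduct_hatMatrix_mulVec_le hX v
    rw [star_trivial, sub_mulVec, one_mulVec, smul_mulVec, dotProduct_sub, dotProduct_smul,
      smul_eq_mul]
    rcases le_or_gt 0 c with hc0 | hc0
    · nlinarith [mul_le_mul_of_nonneg_left h1 hc0]
    · nlinarith [mul_nonpos_of_nonpos_of_nonneg hc0.le h0]

end hatMatrix

end Matrix

section

variable {ι : Type*} [Fintype ι]

lemma sqrt_sum_sub_sq_eq_dist (a b : ι → ℝ) :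
    Real.sqrt (∑ i, (a i - b i) ^ 2) = dist (WithLp.toLp 2 a) (WithLp.toLp 2 b) := by
  simp [EuclideanSpace.dist_eq, Real.dist_eq, sq_abs]

lemma sq_le_dotProduct_sub_of_le_sqrt_sum {β0 β1 u : ι → ℝ} {a : ℝ}
    (hsep : a ≤ Real.sqrt (∑ i, (β1 i - β0 i) ^ 2))
    (hu : Real.sqrt (∑ i, (u i - β0 i) ^ 2) ≤ a / 2) :
    (a / 2) ^ 2 ≤ (u - β1) ⬝ᵥ (u - β1) := by
  rw [sqrt_sum_sub_sq_eq_dist] at hsep hu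
  have htri := dist_triangle (WithLp.toLp 2 β1) (WithLp.toLp 2 u) (WithLp.toLp 2 β0)
  have hself : (u - β1) ⬝ᵥ (u - β1) = ∑ i, (u i - β1 i) ^ 2 := by
    simp only [dotProduct, Pi.sub_apply, sq]
  have ha : 0 ≤ a / 2 := dist_nonneg.trans hu
  rw [hself, ← Real.le_sqrt ha (by positivity), sqrt_sum_sub_sq_eq_dist, dist_comm]
  linarith

end

lemma mulVec_ols_sub {m p : ℕ} {X : Matrix (Fin m) (Fin p) ℝ} (hX : IsUnit (Xᵀ * X).det)
    (y : Fin m → ℝ) (β : Fin p → ℝ) :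
    X *ᵥ (ols m p X y - β) = X.hatMatrix *ᵥ (y - X *ᵥ β) := by
  rw [mulVec_sub, mulVec_sub, mulVec_mulVec, hatMatrix_mul hX, ols, mulVec_mulVec, mulVec_mulVec,
    hatMatrix]

lemma gaussMeasure_le_exp_div_sqrt_det {m : ℕ} {μ : Fin m → ℝ} {σ2 : ℝ} (hσ2 : 0 < σ2)
    {M : Matrix (Fin m) (Fin m) ℝ} (hM : M.PosDef) {E : Set (Fin m → ℝ)} {t : ℝ}
    (hE : ∀ y ∈ E, t + (y - μ) ⬝ᵥ M *ᵥ (y - μ) ≤ (y - μ) ⬝ᵥ (y - μ)) :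
    gaussMeasure m μ σ2 E ≤ ENNReal.ofReal (Real.exp (-t / (2 * σ2)) / Real.sqrt M.det) := by
  set c := (2 * Real.pi * σ2) ^ (-(m : ℝ) / 2)
  set M' := (2 * σ2)⁻¹ • M
  have hM' : M'.PosDef := hM.smul (by positivity)
  have hdens (y : Fin m → ℝ) (hy : y ∈ E) : gaussDensity m μ σ2 y ≤
      Real.exp (-t / (2 * σ2)) * c * Real.exp (-((y - μ) ⬝ᵥ M' *ᵥ (y - μ))) := by
    have hS : ∑ i, (y i - μ i) ^ 2 = (y - μ) ⬝ᵥ (y - μ) := by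
      simp only [dotProduct, Pi.sub_apply, sq]
    rw [gaussDensity, hS, mul_comm (Real.exp (-t / (2 * σ2))) c, mul_assoc c, ← Real.exp_add,
      smul_mulVec, dotProduct_smul, smul_eq_mul]
    gcongr
    have hdiff : -t / (2 * σ2) + -((2 * σ2)⁻¹ * ((y - μ) ⬝ᵥ M *ᵥ (y - μ))) -
        -((y - μ) ⬝ᵥ (y - μ)) / (2 * σ2) =
        ((y - μ) ⬝ᵥ (y - μ) - t - (y - μ) ⬝ᵥ M *ᵥ (y - μ)) / (2 * σ2) := by
      field_simp
      ring
    have hquad := hE y hy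
    exact sub_nonneg.mp (hdiff ▸ div_nonneg (by linarith) (by positivity))
  have hc : c * Real.sqrt (Real.pi ^ m / M'.det) = 1 / Real.sqrt M.det := by
    have hA : 0 < 2 * Real.pi * σ2 := by positivity
    have hdet : Real.pi ^ m / M'.det = (2 * Real.pi * σ2) ^ m / M.det := by
      rw [det_smul, Fintype.card_fin, inv_pow, mul_pow, mul_pow]
      field_simp
      ring
    have hsqrt : Real.sqrt ((2 * Real.pi * σ2) ^ m) = (2 * Real.pi * σ2) ^ ((m : ℝ) / 2) := by
      rw [Real.sqrt_eq_rpow, ← Real.rpow_natCast, ← Real.rpow_mul hA.le]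
      ring_nf
    rw [hdet, Real.sqrt_div' _ hM.det_pos.le, hsqrt, ← mul_div_assoc, ← Real.rpow_add hA,
      neg_div, neg_add_cancel, Real.rpow_zero]
  calc gaussMeasure m μ σ2 E = ∫⁻ y in E, ENNReal.ofReal (gaussDensity m μ σ2 y) :=
        withDensity_apply' _ _
    _ ≤ ∫⁻ y, ENNReal.ofReal (Real.exp (-t / (2 * σ2)) * c *
          Real.exp (-((y - μ) ⬝ᵥ M' *ᵥ (y - μ)))) :=
        (setLIntegral_mono (by fun_prop) fun y hy => ENNReal.ofReal_le_ofReal (hdens y hy)).trans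
          (setLIntegral_le_lintegral _ _)
    _ = ENNReal.ofReal (Real.exp (-t / (2 * σ2)) * c) *
          ∫⁻ ξ, ENNReal.ofReal (Real.exp (-(ξ ⬝ᵥ M' *ᵥ ξ))) := by
        simp_rw [ENNReal.ofReal_mul (by positivity : 0 ≤ Real.exp (-t / (2 * σ2)) * c)]
        rw [lintegral_const_mul _ (by fun_prop),
          lintegral_sub_right_eq_self (fun ξ => ENNReal.ofReal (Real.exp (-(ξ ⬝ᵥ M' *ᵥ ξ)))) μ]
    _ = ENNReal.ofReal (Real.exp (-t / (2 * σ2)) / Real.sqrt M.det) := by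
        rw [lintegral_exp_neg_dotProduct_mulVec hM', ← ENNReal.ofReal_mul (by positivity),
          Fintype.card_fin, mul_assoc, hc, mul_one_div]

lemma exp_neg_div_sqrt_half_pow {m : ℕ} (hm : m ≠ 0) (p : ℕ) {s σ2 : ℝ} (hσ2 : σ2 ≠ 0) :
    Real.exp (-(m * s * p / 8) / (2 * σ2)) / Real.sqrt ((1 - 2⁻¹) ^ p) =
      Real.exp (-(s / (16 * σ2) - Real.log 2 / (2 * m)) * m * p) := by
  have hsqrt : Real.sqrt ((1 - 2⁻¹) ^ p) = Real.exp (-(p * Real.log 2) / 2) := by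
    rw [Real.exp_half, Real.exp_neg, Real.exp_nat_mul, Real.exp_log two_pos,
      show (1 : ℝ) - 2⁻¹ = 2⁻¹ by norm_num, inv_pow]
  rw [hsqrt, ← Real.exp_sub]
  congr 1
  field_simp
  ring

theorem ols_deviation_bound_alternative (m p : ℕ) (hmp : p ≤ m)
    (X : Matrix (Fin m) (Fin p) ℝ) (hX : IsUnit (Xᵀ * X).det)
    (dmin σ2 ε : ℝ) (hσ2 : 0 < σ2)
    (hH : (((m : ℝ)⁻¹) • (Xᵀ * X)).IsHermitian)
    (hdmin : IsLeast (Set.range hH.eigenvalues) dmin) (hdpos : 0 < dmin)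
    (β0 β1 : Fin p → ℝ)
    (hsep : ε * Real.sqrt p ≤ Real.sqrt (∑ k, (β1 k - β0 k) ^ 2)) :
    gaussMeasure m (X.mulVec β1) σ2
        {y | Real.sqrt (∑ k, (ols m p X y k - β0 k) ^ 2) ≤ ε * Real.sqrt p / 2}
      ≤ ENNReal.ofReal
          (Real.exp (-(ε ^ 2 * dmin / (16 * σ2) - Real.log 2 / (2 * m)) * m * p)) := by
  obtain ⟨k, -⟩ := hdmin.1
  have hm : m ≠ 0 := by have := k.pos; omega
  have hXv (v : Fin p → ℝ) : m * dmin * (v ⬝ᵥ v) ≤ (X *ᵥ v) ⬝ᵥ (X *ᵥ v) := by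
    have h := hH.mul_dotProduct_self_le (fun i => hdmin.2 ⟨i, rfl⟩) v
    rw [smul_mulVec, dotProduct_smul, smul_eq_mul, dotProduct_transpose_mul_mulVec] at h
    have hm' : (0 : ℝ) < m := by positivity
    field_simp at h
    linarith
  refine (gaussMeasure_le_exp_div_sqrt_det hσ2
    (posDef_one_sub_smul_hatMatrix hX (c := 2⁻¹) (by norm_num))
    (t := m * (ε ^ 2 * dmin) * p / 8) fun y hy => ?_).trans_eq ?_
  · have hfar := sq_le_dotProduct_sub_of_le_sqrt_sum hsep hy
    rw [div_pow, mul_pow, Real.sq_sqrt (Nat.cast_nonneg p)] at hfar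
    have hproj := hXv (ols m p X y - β1)
    rw [mulVec_ols_sub hX, ← dotProduct_hatMatrix_mulVec hX] at hproj
    rw [sub_mulVec, one_mulVec, smul_mulVec, dotProduct_sub, dotProduct_smul, smul_eq_mul]
    nlinarith [mul_le_mul_of_nonneg_left hfar (by positivity : (0 : ℝ) ≤ m * dmin)]
  · rw [det_one_sub_smul_hatMatrix hX, Fintype.card_fin]
    exact congrArg ENNReal.ofReal (exp_neg_div_sqrt_half_pow hm p hσ2.ne')
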